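/- arXiv:2411.12345 — 2 statements merged into one kernel-verified Lean document; each statement's English description precedes it below -/
import Mathlib

section
/- Let a, b, λ, c be complex numbers with |c| < 1/4, and give every R_II path the weight determined by the constant sequences a_i = a, b_i = b, λ_i = λ, c_i = c. Then for every n ≥ 0 the family (wt(p))_{p∈Γ_n} is summable in ℂ (i.e., the sum Σ_{p∈Γ_n} wt(p) converges absolutely). -/
open Polynomial

/-- Steps of an `R_II` path: up, horizontal, down, vertical-down, backward-down. -/
inductive RStep : Type
  | U | H | D | V | B
  deriving DecidableEq

/-- Displacement of each step. -/
def RStep.disp : RStep → ℤ × ℤ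
  | .U => (1, 1)
  | .H => (1, 0)
  | .D => (1, -1)
  | .V => (0, -1)
  | .B => (-1, -1)

/-- End point of a lattice path starting at `start` with the given list of steps. -/
def endPt (start : ℤ × ℤ) : List RStep → ℤ × ℤ
  | [] => start
  | s :: l => endPt (start + s.disp) l

/-- All intermediate heights along the path (starting at height `h`) are nonnegative,
so that the points of the path lie in `ℤ × ℤ≥0`. -/
def heightsNonneg (h : ℤ) : List RStep → Prop
  | [] => True
  | s :: l => 0 ≤ h + s.disp.2 ∧ heightsNonneg (h + s.disp.2) l

/-- `Gamma n r s` is the set of `R_II` paths from `(0, r)` to `(n, s)`. -/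
def Gamma (n r s : ℕ) : Set (List RStep) :=
  {l | heightsNonneg (r : ℤ) l ∧ endPt (0, (r : ℤ)) l = ((n : ℤ), (s : ℤ))}

/-- The list of all points visited by a path. -/
def pathPoints (start : ℤ × ℤ) : List RStep → List (ℤ × ℤ)
  | [] => [start]
  | s :: l => start :: pathPoints (start + s.disp) l

/-- `RGamma n r s` is the set of restricted `R_II` paths from `(0, r)` to `(n, s)`:
paths in `Gamma n r s` whose points have first coordinate `n` only at the final point. -/
def RGamma (n r s : ℕ) : Set (List RStep) :=
  {l | l ∈ Gamma n r s ∧ ∀ p ∈ (pathPoints (0, (r : ℤ)) l).dropLast, p.1 ≠ (n : ℤ)}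

/-- Weight of a single step starting at height `h`:
`1` for `U`, `b_i` for `H`, `λ_i` for `D`, `a_i` for `V`, `c_i` for `B` starting at height `i`. -/
def stepWt {R : Type*} [CommRing R] (a b lam c : ℕ → R) (h : ℤ) : RStep → R
  | .U => 1
  | .H => b h.toNat
  | .D => lam h.toNat
  | .V => a h.toNat
  | .B => c h.toNat

/-- Weight of a path starting at height `h`: the product of the weights of its steps. -/
def pathWt {R : Type*} [CommRing R] (a b lam c : ℕ → R) : ℤ → List RStep → R
  | _, [] => 1
  | h, s :: l => stepWt a b lam c h s * pathWt a b lam c (h + s.disp.2) l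

/-!
Write `ρ s` for the norm of the weight of a step `s`. Reweighting every step `s` by
`x ^ Δx(s) * y ^ Δy(s)` multiplies the weight of a path from `(0, 0)` to `(n, 0)` by exactly `x ^ n`,
so it suffices to find `x, y > 0` with `∑ₛ ρ s * x ^ Δx(s) * y ^ Δy(s) < 1`: then the reweighted
weights of all step sequences are dominated by a convergent geometric series. The `U` and `B`
steps contribute `t + ‖c‖ / t` with `t = x * y`, which can be made `< 1` exactly when `‖c‖ < 1/4`;
taking `t = 1/2` and `x → 0` makes the contributions of `H`, `D`, `V` negligible.
-/

open Filter Topology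

instance : Fintype RStep :=
  ⟨⟨{.U, .H, .D, .V, .B}, by decide⟩, fun s => by cases s <;> decide⟩

theorem RStep.sum_univ {M : Type*} [AddCommMonoid M] (f : RStep → M) :
    ∑ s, f s = f .U + f .H + f .D + f .V + f .B := by
  change Finset.sum {RStep.U, .H, .D, .V, .B} f = _
  simp only [Finset.mem_insert, Finset.mem_singleton, reduceCtorEq, or_self, not_false_eq_true,
    Finset.sum_insert, Finset.sum_singleton]
  abel

theorem summable_list_prod_map {α : Type*} [Fintype α] {w : α → ℝ} (hw : ∀ a, 0 ≤ w a)
    (hlt : ∑ a, w a < 1) : Summable fun l : List α => (l.map w).prod := by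
  rw [← List.equivSigmaTuple.symm.summable_iff]
  have hprod (x : Σ n, Fin n → α) :
      ((List.ofFn x.2).map w).prod = ∏ i, w (x.2 i) := by
    rw [List.map_ofFn, List.prod_ofFn]; rfl
  simp only [Function.comp_def, List.equivSigmaTuple_symm_apply, hprod]
  refine (summable_sigma_of_nonneg fun x => Finset.prod_nonneg fun i _ => hw _).2
    ⟨fun _ => .of_finite, ?_⟩
  simp only [tsum_fintype, ← Fintype.sum_pow]
  exact summable_geometric_of_lt_one (Finset.sum_nonneg fun a _ => hw a) hlt

theorem endPt_eq_add_sum (start : ℤ × ℤ) (l : List RStep) :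
    endPt start l = start + (l.map RStep.disp).sum := by
  induction l generalizing start with
  | nil => simp [endPt]
  | cons s l ih => simp [endPt, ih, add_assoc]

theorem prod_map_zpow_disp {K : Type*} [Field K] {x y : K} (hx : x ≠ 0) (hy : y ≠ 0)
    (l : List RStep) :
    (l.map fun s => x ^ s.disp.1 * y ^ s.disp.2).prod =
      x ^ (l.map RStep.disp).sum.1 * y ^ (l.map RStep.disp).sum.2 := by
  induction l with
  | nil => simp
  | cons s l ih =>
    simp only [List.map_cons, List.prod_cons, List.sum_cons, ih, Prod.fst_add, Prod.snd_add,
      zpow_add₀ hx, zpow_add₀ hy]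
    ring

theorem pathWt_const {R : Type*} [CommRing R] (a b lam c : R) (h : ℤ) (l : List RStep) :
    pathWt (fun _ => a) (fun _ => b) (fun _ => lam) (fun _ => c) h l =
      (l.map (stepWt (fun _ => a) (fun _ => b) (fun _ => lam) (fun _ => c) 0)).prod := by
  induction l generalizing h with
  | nil => rfl
  | cons s l ih => cases s <;> simp [pathWt, stepWt, ih]

theorem summable_pathWt_const_of_reweighted_sum_lt_one {K : Type*} [NormedField K]
    [CompleteSpace K] (a b lam c : K) (n r s : ℕ) {x y : ℝ} (hx : 0 < x) (hy : 0 < y)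
    (hlt : ∑ t, ‖stepWt (fun _ => a) (fun _ => b) (fun _ => lam) (fun _ => c) 0 t‖ *
      (x ^ t.disp.1 * y ^ t.disp.2) < 1) :
    Summable fun p : Gamma n r s =>
      pathWt (fun _ => a) (fun _ => b) (fun _ => lam) (fun _ => c) r p.1 := by
  set ρ : RStep → ℝ := fun t => ‖stepWt (fun _ => a) (fun _ => b) (fun _ => lam) (fun _ => c) 0 t‖
  set w : RStep → ℝ := fun t => ρ t * (x ^ t.disp.1 * y ^ t.disp.2)
  have hw : ∀ t, 0 ≤ w t := fun t => by positivity
  have hgauge : x ^ (n : ℤ) * y ^ ((s : ℤ) - r) ≠ 0 := by positivity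
  refine .of_norm_bounded
    (((summable_list_prod_map hw hlt).subtype _).mul_left (x ^ (n : ℤ) * y ^ ((s : ℤ) - r))⁻¹) ?_
  rintro ⟨l, -, hend⟩
  have hdisp : (l.map RStep.disp).sum = ((n : ℤ), (s : ℤ) - r) := by
    rw [endPt_eq_add_sum] at hend
    rw [eq_sub_of_add_eq' hend]
    rfl
  refine le_of_eq ?_
  calc ‖pathWt (fun _ => a) (fun _ => b) (fun _ => lam) (fun _ => c) r l‖
      = (l.map ρ).prod := by rw [pathWt_const, List.norm_prod, List.map_map]; rfl
    _ = (x ^ (n : ℤ) * y ^ ((s : ℤ) - r))⁻¹ * (l.map w).prod := by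
      rw [List.prod_map_mul, prod_map_zpow_disp hx.ne' hy.ne', hdisp, mul_comm,
        mul_inv_cancel_right₀ hgauge]

/-- For constant complex weights `a_i = a`, `b_i = b`, `λ_i = λ`, `c_i = c` with
`|c| < 1/4`, for every `n ≥ 0` the family `(wt(p))_{p∈Γ_n}` is summable in ℂ
(i.e. `Σ_{p∈Γ_n} wt(p)` converges absolutely). -/
theorem stmt12 (a b lam c : ℂ) (hc : ‖c‖ < 1 / 4) (n : ℕ) :
    Summable fun p : Gamma n 0 0 =>
      pathWt (fun _ => a) (fun _ => b) (fun _ => lam) (fun _ => c) 0 p.1 := by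
  set f : ℝ → ℝ := fun x => 1 / 2 + 2 * ‖c‖ + x * (‖b‖ + 2 * ‖lam‖ * x + 2 * ‖a‖)
  have hf : Tendsto f (𝓝[>] 0) (𝓝 (1 / 2 + 2 * ‖c‖)) := by
    simpa [f] using ((by fun_prop : Continuous f).tendsto 0).mono_left nhdsWithin_le_nhds
  obtain ⟨x, hfx, hx⟩ :=
    ((hf.eventually_lt_const (show 1 / 2 + 2 * ‖c‖ < 1 by linarith)).and self_mem_nhdsWithin).exists
  refine summable_pathWt_const_of_reweighted_sum_lt_one a b lam c n 0 0 hx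
    (inv_pos.2 (mul_pos two_pos hx)) ?_
  refine lt_of_eq_of_lt ?_ hfx
  simp only [RStep.sum_univ, stepWt, RStep.disp, Int.reduceNeg, mul_inv_rev, norm_one, zpow_ofNat,
    pow_one, one_mul, pow_zero, mul_one, zpow_neg, inv_inv, one_div, f]
  field_simp
  ring
end

section
/- Let (a_i)_{i≥1}, (b_i)_{i≥0}, (λ_i)_{i≥1}, (c_i)_{i≥1} be sequences of complex numbers such that there exists ε > 0 with |c_m| ≤ 1/4 − ε for all m ≥ 1 (no boundedness assumption on a, b, λ). Then for all n, r, s ≥ 0 the family (wt(p))_{p∈RΓ_{n,r,s}} of weights of restricted R_II paths is summable in ℂ. -/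
/-!
A restricted path never reaches the line `x = n` before its last point, and `y - x` never
increases along a path, so all its steps start at heights `≤ n + r`, where `a`, `b`, `λ` are
bounded by some `M`. The endpoint forces `#H + 2#D + #V = n + r - s` and
`#U + #H + #D - #B = n`, hence `|wt p| ≤ M^(#H+#D+#V) t^#B` with `t = 1/4 - ε`, and this is
at most `2^n (M/θ)^(n+r)` (for `M ≥ θ`) times the product of the geometric weights `1/2` on
`U`, `2t` on `B` and `θ = ε/2` on `H`, `D`, `V`. These weights sum to `1 - ε/2 < 1`, so their
products over all words in the steps are summable.
-/

open Polynomial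

instance inst_s14 : Fintype RStep :=
  ⟨{.U, .H, .D, .V, .B}, fun s => by cases s <;> decide⟩

theorem summable_prod_map_of_sum_lt_one {α : Type*} [Fintype α] {w : α → ℝ}
    (hw : ∀ x, 0 ≤ w x) (hsum : ∑ x, w x < 1) :
    Summable fun l : List α => (l.map w).prod := by
  have hofFn : ∀ x : Σ m, Fin m → α,
      ((List.equivSigmaTuple.symm x).map w).prod = ∏ i, w (x.2 i) := by
    rintro ⟨m, f⟩
    simp [List.equivSigmaTuple, List.map_ofFn, List.prod_ofFn, Function.comp_def]
  rw [← List.equivSigmaTuple.symm.summable_iff, Function.comp_def]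
  refine (summable_sigma_of_nonneg fun x => ?_).mpr ⟨fun _ => Summable.of_finite, ?_⟩
  · rw [hofFn]
    exact Finset.prod_nonneg fun i _ => hw _
  · have hlength : ∀ m : ℕ, ∑' f : Fin m → α, ((List.equivSigmaTuple.symm ⟨m, f⟩).map w).prod
        = (∑ x, w x) ^ m := by
      intro m
      simp only [tsum_fintype, hofFn, ← Fintype.prod_sum, Finset.prod_const, Finset.card_univ,
        Fintype.card_fin]
    simp only [hlength]
    exact summable_geometric_of_lt_one (Finset.sum_nonneg fun x _ => hw x) hsum

namespace RStep

theorem disp_snd_le_fst (s : RStep) : s.disp.2 ≤ s.disp.1 := by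
  cases s <;> decide

theorem disp_fst_le_one (s : RStep) : s.disp.1 ≤ 1 := by
  cases s <;> decide

theorem prod_map_eq_pow_count {M : Type*} [CommMonoid M] (f : RStep → M) (l : List RStep) :
    (l.map f).prod = f U ^ l.count U * f H ^ l.count H * f D ^ l.count D *
      f V ^ l.count V * f B ^ l.count B := by
  induction l with
  | nil => simp
  | cons s l ih =>
    rw [List.map_cons, List.prod_cons, ih]
    cases s <;> simp [pow_succ, mul_comm, mul_assoc, mul_left_comm]

end RStep

theorem endPt_eq_count (l : List RStep) (p : ℤ × ℤ) : endPt p l =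
    (p.1 + l.count .U + l.count .H + l.count .D - l.count .B,
     p.2 + l.count .U - l.count .D - l.count .V - l.count .B) := by
  induction l generalizing p with
  | nil => simp [endPt]
  | cons s l ih =>
    rw [endPt, ih]
    cases s <;> simp [RStep.disp] <;> omega

theorem count_le_of_mem_Gamma {n r s : ℕ} {l : List RStep} (hl : l ∈ Gamma n r s) :
    l.count .U ≤ n + l.count .B ∧ l.count .H + l.count .D + l.count .V ≤ n + r := by
  have hend := hl.2
  rw [endPt_eq_count, Prod.ext_iff] at hend
  obtain ⟨hx, hy⟩ := hend
  dsimp only at hx hy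
  omega

def stepHeightsLE (X : ℤ) : ℤ → List RStep → Prop
  | _, [] => True
  | h, s :: l => h ≤ X ∧ stepHeightsLE X (h + s.disp.2) l

theorem pathPoints_cons_dropLast (p : ℤ × ℤ) (s : RStep) (l : List RStep) :
    (pathPoints p (s :: l)).dropLast = p :: (pathPoints (p + s.disp) l).dropLast := by
  rw [pathPoints, List.dropLast_cons_of_ne_nil]
  cases l <;> simp [pathPoints]

/-- Along a path `y - x` never increases and `x` grows by at most one per step, so a path
that stays left of the line `x = N` until its last point stays below `y = N + K`. -/
theorem stepHeightsLE_of_forall_fst_ne (N K : ℤ) (l : List RStep) (p : ℤ × ℤ)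
    (hK : p.2 ≤ p.1 + K) (hN : p.1 ≤ N) (hne : ∀ q ∈ (pathPoints p l).dropLast, q.1 ≠ N) :
    stepHeightsLE (N + K) p.2 l := by
  induction l generalizing p with
  | nil => trivial
  | cons s l ih =>
    rw [pathPoints_cons_dropLast] at hne
    have hpN : p.1 ≠ N := hne p List.mem_cons_self
    have := s.disp_snd_le_fst
    have := s.disp_fst_le_one
    refine ⟨by omega, ih (p + s.disp) ?_ ?_ fun q hq => hne q (List.mem_cons_of_mem _ hq)⟩ <;>
      simp only [Prod.fst_add, Prod.snd_add] <;> omega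

theorem stepHeightsLE_of_mem_RGamma {n r s : ℕ} {l : List RStep} (hl : l ∈ RGamma n r s) :
    stepHeightsLE (n + r : ℕ) r l := by
  push_cast
  exact stepHeightsLE_of_forall_fst_ne n r l (0, r) (by simp) (by simp) hl.2

namespace RStep

def normBound (M t : ℝ) : RStep → ℝ
  | U => 1
  | B => t
  | _ => M

noncomputable def geomWeight (θ t : ℝ) : RStep → ℝ
  | U => 1 / 2
  | B => 2 * t
  | _ => θ

theorem sum_geomWeight (θ t : ℝ) : ∑ s, geomWeight θ t s = 1 / 2 + 2 * t + 3 * θ := by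
  rw [show (Finset.univ : Finset RStep) = {U, H, D, V, B} from rfl]
  simp [geomWeight]
  ring

end RStep

section Weights

variable {R : Type*} [NormedCommRing R] [NormOneClass R] {a b lam c : ℕ → R} {X : ℕ} {M t : ℝ}

theorem norm_stepWt_le (habl : ∀ i ≤ X, ‖a i‖ ≤ M ∧ ‖b i‖ ≤ M ∧ ‖lam i‖ ≤ M)
    (hc : ∀ i, 1 ≤ i → ‖c i‖ ≤ t) {h : ℤ} {s : RStep} (hX : h ≤ X) (hs : 0 ≤ h + s.disp.2) :
    ‖stepWt a b lam c h s‖ ≤ s.normBound M t := by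
  have hi : h.toNat ≤ X := by omega
  cases s <;> simp only [RStep.disp] at hs
  · simp [stepWt, RStep.normBound]
  · exact (habl _ hi).2.1
  · exact (habl _ hi).2.2
  · exact (habl _ hi).1
  · exact hc _ (by omega)

theorem norm_pathWt_le_prod (habl : ∀ i ≤ X, ‖a i‖ ≤ M ∧ ‖b i‖ ≤ M ∧ ‖lam i‖ ≤ M)
    (hc : ∀ i, 1 ≤ i → ‖c i‖ ≤ t) (h : ℤ) (l : List RStep) (hnn : heightsNonneg h l)
    (hX : stepHeightsLE X h l) :
    ‖pathWt a b lam c h l‖ ≤ (l.map (RStep.normBound M t)).prod := by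
  induction l generalizing h with
  | nil => simp [pathWt]
  | cons s l ih =>
    have hstep := norm_stepWt_le habl hc hX.1 hnn.1
    calc ‖pathWt a b lam c h (s :: l)‖
        ≤ ‖stepWt a b lam c h s‖ * ‖pathWt a b lam c (h + s.disp.2) l‖ := norm_mul_le _ _
      _ ≤ s.normBound M t * (l.map (RStep.normBound M t)).prod :=
        mul_le_mul hstep (ih _ hnn.2 hX.2) (norm_nonneg _) ((norm_nonneg _).trans hstep)
      _ = ((s :: l).map (RStep.normBound M t)).prod := rfl

end Weights

theorem prod_normBound_le {n m : ℕ} {κ θ t : ℝ} (hκ : 1 ≤ κ) (hθ : 0 ≤ θ) (ht : 0 ≤ t)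
    {l : List RStep} (hU : l.count .U ≤ n + l.count .B)
    (hHDV : l.count .H + l.count .D + l.count .V ≤ m) :
    (l.map (RStep.normBound (κ * θ) t)).prod ≤
      2 ^ n * κ ^ m * (l.map (RStep.geomWeight θ t)).prod := by
  simp only [RStep.prod_map_eq_pow_count, RStep.normBound, RStep.geomWeight]
  have htwo : (1 : ℝ) ≤ 2 ^ n * 2 ^ l.count .B * (1 / 2) ^ l.count .U :=
    calc (1 : ℝ) = 2 ^ l.count .U * (1 / 2) ^ l.count .U := by rw [← mul_pow]; norm_num
      _ ≤ 2 ^ n * 2 ^ l.count .B * (1 / 2) ^ l.count .U := by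
        rw [← pow_add]; gcongr; norm_num
  have hκpow : κ ^ (l.count .H + l.count .D + l.count .V) ≤ κ ^ m := pow_le_pow_right₀ hκ hHDV
  calc _ = 1 * κ ^ (l.count .H + l.count .D + l.count .V) *
        (θ ^ l.count .H * θ ^ l.count .D * θ ^ l.count .V * t ^ l.count .B) := by ring
    _ ≤ (2 ^ n * 2 ^ l.count .B * (1 / 2) ^ l.count .U) * κ ^ m *
        (θ ^ l.count .H * θ ^ l.count .D * θ ^ l.count .V * t ^ l.count .B) := by
      gcongr
    _ = _ := by ring

theorem exists_norm_bound_of_le {R : Type*} [Norm R] (a b lam : ℕ → R) (N : ℕ) :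
    ∃ M, ∀ i ≤ N, ‖a i‖ ≤ M ∧ ‖b i‖ ≤ M ∧ ‖lam i‖ ≤ M := by
  obtain ⟨M, hM⟩ := ((Set.finite_Iic N).image fun i => max ‖a i‖ (max ‖b i‖ ‖lam i‖)).bddAbove
  exact ⟨M, fun i hi => by simpa only [max_le_iff] using hM ⟨i, hi, rfl⟩⟩

/-- If `|c_m| ≤ 1/4 − ε` for all `m ≥ 1` for some fixed `ε > 0` (with no boundedness
assumption on `a`, `b`, `λ`), then for all `n, r, s ≥ 0` the family of weights of
restricted `R_II` paths `(wt(p))_{p∈RΓ_{n,r,s}}` is summable in ℂ. -/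
theorem stmt14 (a b lam c : ℕ → ℂ)
    (ε : ℝ) (hε : 0 < ε) (hc : ∀ m : ℕ, 1 ≤ m → ‖c m‖ ≤ 1 / 4 - ε)
    (n r s : ℕ) :
    Summable fun p : RGamma n r s => pathWt a b lam c (r : ℤ) p.1 := by
  have ht : 0 ≤ 1 / 4 - ε := (norm_nonneg _).trans (hc 1 le_rfl)
  have hθ : 0 < ε / 2 := half_pos hε
  obtain ⟨M, hM⟩ := exists_norm_bound_of_le a b lam (n + r)
  set κ := max 1 (M / (ε / 2))
  have habl :
      ∀ i ≤ n + r, ‖a i‖ ≤ κ * (ε / 2) ∧ ‖b i‖ ≤ κ * (ε / 2) ∧ ‖lam i‖ ≤ κ * (ε / 2) := by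
    have hMκ : M ≤ κ * (ε / 2) := (div_le_iff₀ hθ).mp (le_max_right _ _)
    exact fun i hi => (hM i hi).imp (·.trans hMκ) (And.imp (·.trans hMκ) (·.trans hMκ))
  have hgeom : ∑ x, RStep.geomWeight (ε / 2) (1 / 4 - ε) x < 1 := by
    rw [RStep.sum_geomWeight]; linarith
  refine .of_norm_bounded (((summable_prod_map_of_sum_lt_one (fun x => ?_) hgeom).subtype _
    ).mul_left (2 ^ n * κ ^ (n + r))) fun ⟨l, hl⟩ => ?_
  · cases x <;> simp only [RStep.geomWeight] <;> linarith
  obtain ⟨hU, hHDV⟩ := count_le_of_mem_Gamma hl.1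
  exact (norm_pathWt_le_prod habl hc r l hl.1.1 (stepHeightsLE_of_mem_RGamma hl)).trans
    (prod_normBound_le (le_max_left _ _) hθ.le ht hU hHDV)
end
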